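/- arXiv:1209.2655 — 7 statements merged into one kernel-verified Lean document; each statement's English description precedes it below -/
import Mathlib

section
/- The map $(a,b) \mapsto \langle a,b\rangle!$ on binary vectors $a,b \in \{0,1\}^N$ is a positive definite kernel, i.e., for any finite family of binary vectors $a^{(1)},\dots,a^{(n)} \in \{0,1\}^N$ and real coefficients $c_1,\dots,c_n$, one has $\sum_{p,q} c_p c_q \cdot (\langle a^{(p)}, a^{(q)}\rangle!) \geq 0$. -/
/-!
A permutation of a finite set `T` is determined by the set `S ⊆ T` of points it moves together
with a derangement of `S`, hence `#T ! = ∑_{S ⊆ T} d(#S)` with `d` the derangement numbers.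
For binary vectors `⟨a, b⟩` is the size of the intersection of their supports `A ∩ B`, and
`S ⊆ A ∩ B` iff `S ⊆ A` and `S ⊆ B`, so the kernel equals `∑_S d(#S) [S ⊆ A] [S ⊆ B]`:
a nonnegative combination of rank-one kernels.
-/

open Finset Equiv
open scoped Nat

theorem card_perm_support_eq_numDerangements {α : Type*} [Fintype α] [DecidableEq α]
    (S : Finset α) :
    Fintype.card {f : Perm α // f.support = S} = numDerangements #S := by
  rw [← Fintype.card_coe S, ← card_derangements_eq_numDerangements]
  refine Fintype.card_congr ((derangements.subtypeEquiv (· ∈ S)).trans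
    (subtypeEquivRight fun f => ?_)).symm
  simp [Finset.ext_iff, Function.IsFixedPt, not_iff_comm]

theorem Fintype.factorial_card_eq_sum_numDerangements (α : Type*) [Fintype α] [DecidableEq α] :
    (Fintype.card α)! = ∑ S : Finset α, numDerangements #S := by
  rw [← Fintype.card_perm, ← Finset.card_univ, Finset.card_eq_sum_card_fiberwise
    (f := Perm.support) (t := univ) (fun _ _ => mem_univ _)]
  refine Finset.sum_congr rfl fun S _ => ?_
  rw [← card_perm_support_eq_numDerangements, Fintype.card_subtype]

theorem Finset.factorial_card_eq_sum_powerset_numDerangements {β : Type*} (T : Finset β) :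
    (#T)! = ∑ S ∈ T.powerset, numDerangements #S := by
  classical
  have h := Fintype.factorial_card_eq_sum_numDerangements T
  rwa [← powerset_univ, sum_powerset_apply_card, card_univ, Fintype.card_coe,
    ← sum_powerset_apply_card] at h

theorem factorial_card_inter_eq_sum_boole {α R : Type*} [Fintype α] [DecidableEq α] [Semiring R]
    (A B : Finset α) :
    ((#(A ∩ B))! : R) = ∑ S : Finset α,
      (numDerangements #S : R) * (if S ⊆ A then 1 else 0) * (if S ⊆ B then 1 else 0) := by
  have powerset_eq : (A ∩ B).powerset = ({S | S ⊆ A ∩ B} : Finset (Finset α)) := by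
    ext; simp only [mem_powerset, mem_filter, mem_univ, true_and]
  rw [factorial_card_eq_sum_powerset_numDerangements, powerset_eq, sum_filter, Nat.cast_sum]
  refine sum_congr rfl fun S _ => ?_
  simp only [subset_inter_iff, mul_boole, ← ite_and, and_comm, Nat.cast_ite, Nat.cast_zero]

theorem sum_sum_mul_mul_sum_rank_one_nonneg {ι κ R : Type*} [CommRing R] [LinearOrder R]
    [IsStrictOrderedRing R] [Fintype ι] (s : Finset κ) {w : κ → R} (hw : ∀ k ∈ s, 0 ≤ w k)
    (v : κ → ι → R) (c : ι → R) :
    0 ≤ ∑ p, ∑ q, c p * c q * ∑ k ∈ s, w k * v k p * v k q := by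
  have gram : ∑ p, ∑ q, c p * c q * ∑ k ∈ s, w k * v k p * v k q
      = ∑ k ∈ s, w k * (∑ p, c p * v k p) ^ 2 := by
    simp_rw [sq, sum_mul_sum, mul_sum, sum_comm (s := s)]
    refine sum_congr rfl fun p _ => sum_congr rfl fun q _ => sum_congr rfl fun k _ => ?_
    ring
  rw [gram]
  exact sum_nonneg fun k hk => mul_nonneg (hw k hk) (sq_nonneg _)

theorem sum_sum_mul_mul_factorial_card_inter_nonneg {ι α R : Type*} [CommRing R] [LinearOrder R]
    [IsStrictOrderedRing R] [Fintype ι] [Fintype α] [DecidableEq α] (A : ι → Finset α)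
    (c : ι → R) :
    0 ≤ ∑ p, ∑ q, c p * c q * ((#(A p ∩ A q))! : R) := by
  simp_rw [factorial_card_inter_eq_sum_boole (R := R)]
  exact sum_sum_mul_mul_sum_rank_one_nonneg _ (fun _ _ => by positivity) _ c

theorem sum_mul_eq_card_inter_of_binary {ι : Type*} [Fintype ι] [DecidableEq ι] {x y : ι → ℕ}
    (hx : ∀ t, x t = 0 ∨ x t = 1) (hy : ∀ t, y t = 0 ∨ y t = 1) :
    ∑ t, x t * y t = #(({t | x t = 1} : Finset ι) ∩ ({t | y t = 1} : Finset ι)) := by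
  rw [← filter_and, card_filter]
  refine sum_congr rfl fun t _ => ?_
  rcases hx t with h | h <;> rcases hy t with h' | h' <;> simp [h, h']

/-- The map `(a,b) ↦ ⟨a,b⟩!` on binary vectors `a, b ∈ {0,1}^N` is a positive
definite kernel. -/
theorem stmt1 (N : ℕ) (n : ℕ) (x : Fin n → (Fin N → ℕ))
    (hx : ∀ p t, x p t = 0 ∨ x p t = 1) (c : Fin n → ℝ) :
    0 ≤ ∑ p, ∑ q, c p * c q * ((∑ t, x p t * x q t).factorial : ℝ) := by
  simp_rw [sum_mul_eq_card_inter_of_binary (hx _) (hx _)]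
  exact sum_sum_mul_mul_factorial_card_inter_nonneg _ c
end

section
/- If $h : X \times X \to \mathbb{R}$ is a positive definite kernel, then $K(A,B) := \sum_{a \in A} \sum_{b \in B} h(a,b)$ is a positive definite kernel on finite multisets (or finite tuples) of elements of $X$. -/
/-- A function `k : X × X → ℝ` is a positive definite kernel if all of its finite Gram
matrices are positive semidefinite. -/
def IsPDKernel {X : Type*} (k : X → X → ℝ) : Prop :=
  ∀ (n : ℕ) (x : Fin n → X) (c : Fin n → ℝ), 0 ≤ ∑ p, ∑ q, c p * c q * k (x p) (x q)

/-- Haussler's convolution kernel, simple form: if `h` is a positive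
definite kernel on `X`, then `K(A,B) = ∑_{a ∈ A} ∑_{b ∈ B} h(a,b)` is a positive
definite kernel on finite multisets of elements of `X`. -/
theorem stmt4 {X : Type*} (h : X → X → ℝ) (hpd : IsPDKernel h) :
    IsPDKernel (fun A B : Multiset X => (A.map fun a => (B.map fun b => h a b).sum).sum) := by
  intro n x c
  classical
  set l : Fin n → List X := fun p => (x p).toList with hl
  have hx : ∀ p, x p = ((l p : List X) : Multiset X) := fun p => (Multiset.coe_toList _).symm
  have key : ∀ p q, ((x p).map fun a => ((x q).map fun b => h a b).sum).sum
      = ∑ i : Fin (l p).length, ∑ j : Fin (l q).length, h ((l p).get i) ((l q).get j) := by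
    intro p q
    rw [hx p, hx q]
    simp only [Multiset.map_coe, Multiset.sum_coe]
    rw [← Fin.sum_univ_fun_getElem]
    refine Finset.sum_congr rfl fun i _ => ?_
    simp [List.get_eq_getElem]
  let I := Σ p : Fin n, Fin (l p).length
  let e : Fin (Fintype.card I) ≃ I := (Fintype.equivFin I).symm
  have key2 := hpd (Fintype.card I) (fun i => (l (e i).1).get (e i).2) (fun i => c (e i).1)
  refine le_trans key2 (le_of_eq ?_)
  have hsig : ∀ f : I → ℝ, ∑ pi : I, f pi = ∑ p, ∑ i : Fin (l p).length, f ⟨p, i⟩ := by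
    intro f
    rw [← Finset.univ_sigma_univ]
    exact Finset.sum_sigma _ _ _
  have h1 : (∑ i, ∑ j, c (e i).1 * c (e j).1 *
        h ((l (e i).1).get (e i).2) ((l (e j).1).get (e j).2))
      = ∑ pi : I, ∑ qj : I, c pi.1 * c qj.1 * h ((l pi.1).get pi.2) ((l qj.1).get qj.2) := by
    rw [← Equiv.sum_comp e (fun pi : I => ∑ qj : I,
      c pi.1 * c qj.1 * h ((l pi.1).get pi.2) ((l qj.1).get qj.2))]
    refine Finset.sum_congr rfl fun i _ => ?_
    exact Equiv.sum_comp e (fun qj : I =>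
      c (e i).1 * c qj.1 * h ((l (e i).1).get (e i).2) ((l qj.1).get qj.2))
  rw [h1, hsig]
  refine Finset.sum_congr rfl fun p _ => ?_
  simp only [hsig]
  rw [Finset.sum_comm]
  refine Finset.sum_congr rfl fun q _ => ?_
  rw [key p q, Finset.mul_sum]
  refine Finset.sum_congr rfl fun i _ => ?_
  rw [Finset.mul_sum]
end

section
/- The map $(\rho,\gamma) \mapsto \prod_{i,j=1}^d x_{ij}!$, where $X = \chi(\rho;\gamma)$ has entries $x_{ij} = \#\{t \le N : \rho_t = i, \gamma_t = j\}$, is a positive definite kernel on $\{1,\dots,d\}^N$. -/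
open Finset Equiv

theorem IsPDKernel.sum_mul_self {X ι : Type*} [Fintype ι] (φ : ι → X → ℝ) :
    IsPDKernel fun x y => ∑ i, φ i x * φ i y := by
  intro n x c
  have hsq : ∀ i, (∑ p, c p * φ i (x p)) ^ 2 = ∑ p, ∑ q, c p * c q * (φ i (x p) * φ i (x q)) := by
    intro i
    rw [sq, sum_mul_sum]
    exact sum_congr rfl fun p _ => sum_congr rfl fun q _ => by ring
  calc 0 ≤ ∑ i, (∑ p, c p * φ i (x p)) ^ 2 := by positivity
    _ = ∑ p, ∑ q, c p * c q * ∑ i, φ i (x p) * φ i (x q) := by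
      simp only [hsq, mul_sum]
      rw [sum_comm]
      exact sum_congr rfl fun p _ => sum_comm

section

variable {α β γ : Type*} [Fintype α] [DecidableEq α] [Fintype β] [DecidableEq β]
  [Fintype γ] [DecidableEq γ]

theorem card_perm_comp_eq_and_comp_eq (f : α → β) (g : α → γ) :
    Fintype.card {σ : Perm α // f ∘ σ = f ∧ g ∘ σ = g} =
      ∏ b, ∏ c, (#{a | f a = b ∧ g a = c}).factorial := by
  let fg : α → β × γ := fun a => (f a, g a)
  have hfix : ∀ σ : Perm α, f ∘ σ = f ∧ g ∘ σ = g ↔ fg ∘ σ = fg := by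
    simp [fg, funext_iff, forall_and]
  rw [Fintype.card_congr (subtypeEquivRight hfix), DomMulAct.stabilizer_card, Fintype.prod_prod_type]
  simp only [Fintype.card_subtype, fg, Prod.ext_iff]

theorem prod_factorial_card_eq_sum_perm (f : α → β) (g : α → γ) :
    (∏ b, ∏ c, ((#{a | f a = b ∧ g a = c}).factorial : ℝ)) =
      ∑ σ : Perm α, (if f ∘ σ = f then 1 else 0) * (if g ∘ σ = g then 1 else 0) := by
  simp only [ite_zero_mul_ite_zero, one_mul]
  rw [sum_boole, ← Fintype.card_subtype, card_perm_comp_eq_and_comp_eq]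
  push_cast
  rfl

end

/-- `(ρ,γ) ↦ ∏_{i,j} x_{ij}!`, where `X = χ(ρ;γ)` is the contingency matrix
with entries `x_{ij} = #{t : ρ_t = i, γ_t = j}`, is a positive definite kernel on
`{1,…,d}^N`. -/
theorem stmt7 (d N : ℕ) :
    IsPDKernel (fun ρ γ : Fin N → Fin d =>
      (∏ i : Fin d, ∏ j : Fin d,
        ((Finset.univ.filter fun t : Fin N => ρ t = i ∧ γ t = j).card.factorial : ℝ))) := by
  simpa only [prod_factorial_card_eq_sum_perm] using
    IsPDKernel.sum_mul_self fun (σ : Perm (Fin N)) (ρ : Fin N → Fin d) =>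
      if ρ ∘ σ = ρ then (1 : ℝ) else 0
end

section
/- Let $r, c \in \mathbb{N}^d$ with $\sum_i r_i = \sum_j c_j = N$, and let $\rho, \gamma \in \{1,\dots,d\}^N$ be the canonical sorted representations of $r$ and $c$ (i.e., $\rho$ lists $i$ repeated $r_i$ times in increasing order of $i$). For each $X \in \mathbb{U}(r,c)$ (integral matrices with row sums $r$ and column sums $c$), the number of permutations $\pi \in S_N$ with $\chi(\rho; \gamma_\pi) = X$ equals the Fisher–Yates statistic $n(X) = \dfrac{r_1! \cdots r_d! \cdot c_1! \cdots c_d!}{\prod_{i,j} x_{ij}!}$. -/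
/-!
Choose `P : Fin N → Fin d × Fin d` taking the value `(i, j)` exactly `x_{ij}` times and count the
pairs of permutations `(π, σ)` with `P ∘ σ = (ρ, γ ∘ π)` in two ways. For fixed `π` the admissible
`σ` form a coset of the stabilizer of `P`, nonempty iff `(ρ, γ ∘ π)` has the same fiber sizes as
`P`, i.e. iff `χ(ρ; γ_π) = X`; so each such `π` contributes `∏ x_{ij}!`. For fixed `σ` a `π`
exists iff the first coordinate of `P ∘ σ` is `ρ`, which holds for `∏ rᵢ!` permutations `σ`, and
then the admissible `π` form a coset of the stabilizer of `γ`, of size `∏ cⱼ!`.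
-/

open Finset Equiv Nat

section FiberCount

variable {α β : Type*} [Fintype α] [DecidableEq β]

theorem card_fiber_comp_perm (f : α → β) (π : Perm α) (b : β) :
    #{a | f (π a) = b} = #{a | f a = b} :=
  card_equiv π fun a => by simp

theorem exists_perm_comp_eq {f g : α → β} (h : ∀ b, #{a | g a = b} = #{a | f a = b}) :
    ∃ τ : Perm α, f ∘ τ = g :=
  ⟨ofFiberEquiv fun b => Fintype.equivOfCardEq (by simpa [Fintype.card_subtype] using h b),
    funext (ofFiberEquiv_map _)⟩

theorem exists_card_fiber_eq [Fintype β] (n : β → ℕ) (h : ∑ b, n b = Fintype.card α) :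
    ∃ P : α → β, ∀ b, #{a | P a = b} = n b := by
  let e : α ≃ Σ b, Fin (n b) := Fintype.equivOfCardEq (by simp [h])
  refine ⟨fun a => (e a).1, fun b => ?_⟩
  rw [card_equiv e (t := {x | x.1 = b}) (by simp), card_filter, Fintype.sum_sigma]
  simp [apply_ite]

variable [DecidableEq α] [Fintype β]

theorem card_perm_comp_eq {f g : α → β} (h : ∀ b, #{a | g a = b} = #{a | f a = b}) :
    #{π : Perm α | f ∘ π = g} = ∏ b, (#{a | f a = b})! := by
  obtain ⟨τ, rfl⟩ := exists_perm_comp_eq h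
  have hcoset : #{π : Perm α | f ∘ π = f ∘ τ} = #{π : Perm α | f ∘ π = f} :=
    card_equiv (Equiv.mulRight τ⁻¹) fun π => by
      simpa [funext_iff] using τ.forall_congr fun x => by simp
  rw [hcoset, ← Fintype.card_subtype, DomMulAct.stabilizer_card]
  simp [Fintype.card_subtype]

theorem card_perm_comp_eq_ite (f g : α → β) :
    #{π : Perm α | f ∘ π = g} =
      if ∀ b, #{a | g a = b} = #{a | f a = b} then ∏ b, (#{a | f a = b})! else 0 := by
  split_ifs with h
  · exact card_perm_comp_eq h
  · refine card_eq_zero.2 (filter_eq_empty_iff.2 fun π _ hπ => h fun b => ?_)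
    rw [← hπ]
    exact card_fiber_comp_perm f π b

end FiberCount

section PairFibers

variable {α β γ : Type*} [Fintype α] [DecidableEq β] [DecidableEq γ]

theorem card_fiber_fst [Fintype γ] (P : α → β × γ) (b : β) :
    #{a | (P a).1 = b} = ∑ c, #{a | P a = (b, c)} := by
  rw [card_eq_sum_card_fiberwise (f := fun a => (P a).2) (t := univ) (by simp)]
  simp [filter_filter, Prod.ext_iff]

theorem card_fiber_snd [Fintype β] (P : α → β × γ) (c : γ) :
    #{a | (P a).2 = c} = ∑ b, #{a | P a = (b, c)} := by
  rw [card_eq_sum_card_fiberwise (f := fun a => (P a).1) (t := univ) (by simp)]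
  simp [filter_filter, Prod.ext_iff, and_comm]

variable [DecidableEq α]

theorem card_perm_pair_mk_eq (f : α → β) (g : α → γ) (h : α → β × γ) :
    #{π : Perm α | h = fun a => (f a, g (π a))} =
      if Prod.fst ∘ h = f then #{π : Perm α | g ∘ π = Prod.snd ∘ h} else 0 := by
  split_ifs with hf
  · congr 1
    ext π
    simp [funext_iff, Prod.ext_iff, ← hf, eq_comm]
  · refine card_eq_zero.2 (filter_eq_empty_iff.2 fun π _ hπ => hf ?_)
    simp [hπ, Function.comp_def]

variable [Fintype β] [Fintype γ]

theorem card_perm_fiber_pair_mul_prod_factorial (f : α → β) (g : α → γ) (P : α → β × γ)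
    (hf : ∀ b, #{a | (P a).1 = b} = #{a | f a = b})
    (hg : ∀ c, #{a | (P a).2 = c} = #{a | g a = c}) :
    #{π : Perm α | ∀ x, #{a | (f a, g (π a)) = x} = #{a | P a = x}} * ∏ x, (#{a | P a = x})! =
      (∏ b, (#{a | f a = b})!) * ∏ c, (#{a | g a = c})! := by
  have hσ (σ : Perm α) : #{π : Perm α | P ∘ σ = fun a => (f a, g (π a))} =
      if (Prod.fst ∘ P) ∘ σ = f then ∏ c, (#{a | g a = c})! else 0 := by
    rw [card_perm_pair_mk_eq]
    refine if_congr Iff.rfl (card_perm_comp_eq fun c => ?_) rfl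
    exact (card_fiber_comp_perm (fun a => (P a).2) σ c).trans (hg c)
  have hdouble := sum_card_bipartiteAbove_eq_sum_card_bipartiteBelow (s := univ) (t := univ)
    (r := fun (π σ : Perm α) => P ∘ σ = fun a => (f a, g (π a)))
  simp only [bipartiteAbove, bipartiteBelow, card_perm_comp_eq_ite, hσ, sum_ite, sum_const_zero,
    add_zero, sum_const, smul_eq_mul] at hdouble
  rw [hdouble]
  simp [hf]

end PairFibers

theorem stmt8_general (d N : ℕ) (r c : Fin d → ℕ) (hr : ∑ i, r i = N)
    (ρ γ : Fin N → Fin d)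
    (hρ : ∀ i, (Finset.univ.filter fun t => ρ t = i).card = r i)
    (hγ : ∀ j, (Finset.univ.filter fun t => γ t = j).card = c j)
    (X : Fin d → Fin d → ℕ)
    (hX1 : ∀ i, ∑ j, X i j = r i) (hX2 : ∀ j, ∑ i, X i j = c j) :
    (Finset.univ.filter fun π : Equiv.Perm (Fin N) =>
        ∀ i j, (Finset.univ.filter fun t => ρ t = i ∧ γ (π t) = j).card = X i j).card
      * ∏ i, ∏ j, (X i j).factorial
    = (∏ i, (r i).factorial) * ∏ j, (c j).factorial := by
  obtain ⟨P, hP⟩ := exists_card_fiber_eq (α := Fin N) (fun x : Fin d × Fin d => X x.1 x.2)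
    (by simp [Fintype.sum_prod_type, hX1, hr])
  have hf (i : Fin d) : #{t | (P t).1 = i} = #{t | ρ t = i} := by
    simp [card_fiber_fst, hP, hX1, hρ]
  have hg (j : Fin d) : #{t | (P t).2 = j} = #{t | γ t = j} := by
    simp [card_fiber_snd, hP, hX2, hγ]
  simpa [hP, hρ, hγ, Fintype.prod_prod_type] using
    card_perm_fiber_pair_mul_prod_factorial ρ γ P hf hg

/-- Fisher–Yates statistic: let `r, c ∈ ℕ^d` with equal total mass `N`, and
let `ρ, γ ∈ {1,…,d}^N` be the canonical sorted representations of `r` and `c` (monotone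
sequences in which the value `i` appears `r i` resp. `c i` times).  For every contingency
table `X ∈ 𝕌(r,c)`, the number of permutations `π ∈ S_N` with `χ(ρ; γ_π) = X` equals
`(∏ᵢ rᵢ!)(∏ⱼ cⱼ!) / ∏_{ij} x_{ij}!` (stated multiplicatively). -/
theorem stmt8 (d N : ℕ) (r c : Fin d → ℕ) (hr : ∑ i, r i = N) (hc : ∑ j, c j = N)
    (ρ γ : Fin N → Fin d) (hρm : Monotone ρ) (hγm : Monotone γ)
    (hρ : ∀ i, (Finset.univ.filter fun t => ρ t = i).card = r i)
    (hγ : ∀ j, (Finset.univ.filter fun t => γ t = j).card = c j)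
    (X : Fin d → Fin d → ℕ)
    (hX1 : ∀ i, ∑ j, X i j = r i) (hX2 : ∀ j, ∑ i, X i j = c j) :
    (Finset.univ.filter fun π : Equiv.Perm (Fin N) =>
        ∀ i j, (Finset.univ.filter fun t => ρ t = i ∧ γ (π t) = j).card = X i j).card
      * ∏ i, ∏ j, (X i j).factorial
    = (∏ i, (r i).factorial) * ∏ j, (c j).factorial :=
  stmt8_general d N r c hr ρ γ hρ hγ X hX1 hX2
end

section
/- With notation as in the Fisher–Yates statement: for any matrix $K \in \mathbb{R}_+^{d\times d}$, $\sum_{\pi \in S_N} \left(\prod_{t=1}^N k_{\rho_t, (\gamma_\pi)_t}\right) = r_1! \cdots r_d! \cdot c_1! \cdots c_d! \sum_{X \in \mathbb{U}(r,c)} \frac{1}{\prod_{i,j} x_{ij}!} \prod_{i,j} k_{ij}^{x_{ij}}$. -/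
open Finset in
/-- The finite set `𝕌(r,c)` of nonnegative integral `d × d` matrices with row sums `r`
and column sums `c` (every entry of such a matrix is at most the total mass). -/
def UTables (d : ℕ) (r c : Fin d → ℕ) : Finset (Fin d → Fin d → ℕ) :=
  (Fintype.piFinset fun _ : Fin d => Fintype.piFinset fun _ : Fin d =>
      Finset.range ((∑ i, r i) + 1)).filter
    (fun X => (∀ i, ∑ j, X i j = r i) ∧ (∀ j, ∑ i, X i j = c j))

/-!
Both sides depend only on the margins `(r, c)` and satisfy the same recursion
`F (r + e a) c = ∑ j, c j * K a j * F r (c - e j)` with `F 0 0 = 1`.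
For the permutation sum, fix `p = π 0` (`Equiv.Perm.decomposeFin`): what remains is a permutation
sum with one letter `ρ 0 = a` and one letter `γ p` removed, and grouping by `γ p = j` produces the
factor `c j`. For the table sum, multiply by `r a + 1 = ∑ j, X a j`; removing one unit from the
entry `(a, j)` of the tables with `X a j ≠ 0` is a bijection onto `𝕌(r, c - e j)` that turns
`X a j * K ^ X / X!` into `K a j * K ^ Y / Y!`.
-/

open Finset

section ProdAddSingle

variable {ι κ M : Type*} [Fintype ι] [DecidableEq ι] [Fintype κ] [DecidableEq κ] [CommMonoid M]

theorem prod_apply_add_single {A : Type*} [AddMonoid A] (f : ι → A → M) (g : A → M)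
    (v : ι → A) (a : ι) (x : A) (hf : ∀ y, f a (y + x) = g y * f a y) :
    ∏ i, f i ((v + Pi.single a x : ι → A) i) = g (v a) * ∏ i, f i (v i) := by
  have h : ∀ i, f i ((v + Pi.single a x : ι → A) i) =
      (if i = a then g (v a) else 1) * f i (v i) := by
    intro i
    by_cases hi : i = a
    · subst hi; simp [hf]
    · simp [hi]
  rw [Fintype.prod_congr _ _ h, prod_mul_distrib, Fintype.prod_ite_eq']

theorem prod_prod_apply_add_single_single (f : ι → κ → ℕ → M) (g : ℕ → M)
    (Y : ι → κ → ℕ) (a : ι) (b : κ) (hf : ∀ n, f a b (n + 1) = g n * f a b n) :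
    ∏ i, ∏ j, f i j ((Y + Pi.single a (Pi.single b 1) : ι → κ → ℕ) i j) =
      g (Y a b) * ∏ i, ∏ j, f i j (Y i j) :=
  prod_apply_add_single (fun i row => ∏ j, f i j (row j)) (fun row => g (row b)) Y a _
    fun row => prod_apply_add_single (f a) g row b 1 hf

theorem prod_factorial_add_single (r : ι → ℕ) (a : ι) :
    ∏ i, ((r + Pi.single a 1 : ι → ℕ) i).factorial = (r a + 1) * ∏ i, (r i).factorial :=
  prod_apply_add_single (fun _ n => n.factorial) (· + 1) r a 1 Nat.factorial_succ

end ProdAddSingle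

theorem Pi.single_le_iff_of_nonneg {ι α : Type*} [DecidableEq ι] [Zero α] [Preorder α] {i : ι}
    {x : α} {v : ι → α} (hv : 0 ≤ v) : Pi.single i x ≤ v ↔ x ≤ v i := by
  refine ⟨fun h => by simpa using h i, fun h j => ?_⟩
  rcases eq_or_ne j i with rfl | hj
  · simpa using h
  · simpa [hj] using hv j

section FiberCard

variable {α α' β : Type*} [Fintype α] [Fintype α'] [DecidableEq β]

def fiberCard (f : α → β) (b : β) : ℕ := #{a | f a = b}

theorem fiberCard_comp_equiv (f : α → β) (σ : α' ≃ α) : fiberCard (f ∘ σ) = fiberCard f := by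
  funext b
  simp only [fiberCard, card_filter]
  exact σ.sum_comp fun a => if f a = b then 1 else 0

theorem fiberCard_fin_succ {n : ℕ} (f : Fin (n + 1) → β) :
    fiberCard f = fiberCard (f ∘ Fin.succ) + Pi.single (f 0) 1 := by
  funext b
  simp only [fiberCard, card_filter, Fin.sum_univ_succ, Pi.add_apply, Pi.single_apply,
    Function.comp_apply]
  split_ifs <;> simp_all [add_comm]

theorem fiberCard_of_isEmpty [IsEmpty α] (f : α → β) : fiberCard f = 0 := by
  funext b
  simp [fiberCard]

theorem sum_comp_eq_sum_fiberCard_mul [Fintype β] {R : Type*} [NonAssocSemiring R] (f : α → β)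
    (g : β → R) : ∑ a, g (f a) = ∑ b, (fiberCard f b : R) * g b := by
  rw [← sum_fiberwise' univ f g]
  simp [fiberCard, sum_const]

end FiberCard

section Tables

variable {ι κ : Type*} [Fintype ι] [DecidableEq ι] [Fintype κ] [DecidableEq κ]

noncomputable def tableWeight (K : ι → κ → ℝ) (X : ι → κ → ℕ) : ℝ :=
  (1 / ∏ i, ∏ j, ((X i j).factorial : ℝ)) * ∏ i, ∏ j, K i j ^ X i j

theorem tableWeight_add_single_single (K : ι → κ → ℝ) (Y : ι → κ → ℕ) (a : ι) (b : κ) :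
    ((Y a b : ℝ) + 1) * tableWeight K (Y + Pi.single a (Pi.single b 1)) =
      K a b * tableWeight K Y := by
  have hfact := prod_prod_apply_add_single_single (fun _ _ n => (n.factorial : ℝ))
    (fun n => (n : ℝ) + 1) Y a b fun n => by push_cast [Nat.factorial_succ]; ring
  have hpow := prod_prod_apply_add_single_single (fun i j n => K i j ^ n) (fun _ => K a b)
    Y a b fun n => pow_succ' _ _
  have hpos : (0 : ℝ) < ∏ i, ∏ j, ((Y i j).factorial : ℝ) := by positivity
  simp only [tableWeight] at hfact hpow ⊢
  rw [hfact, hpow]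
  field_simp

end Tables

section UTables

variable {d : ℕ}

theorem mem_UTables {r c : Fin d → ℕ} {X : Fin d → Fin d → ℕ} :
    X ∈ UTables d r c ↔ (fun i => ∑ j, X i j) = r ∧ ∑ i, X i = c := by
  simp only [UTables, mem_filter, funext_iff, Finset.sum_apply]
  refine and_iff_right_of_imp fun ⟨hrow, _⟩ => ?_
  simp only [Fintype.mem_piFinset, mem_range, Nat.lt_succ_iff]
  intro i j
  calc X i j ≤ ∑ j, X i j := single_le_sum (fun _ _ => Nat.zero_le _) (mem_univ j)
    _ = r i := hrow i
    _ ≤ ∑ i, r i := single_le_sum (fun _ _ => Nat.zero_le _) (mem_univ i)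

theorem entry_le_of_mem_UTables {r c : Fin d → ℕ} {X : Fin d → Fin d → ℕ}
    (hX : X ∈ UTables d r c) (i j : Fin d) : X i j ≤ c j := by
  rw [← (mem_UTables.1 hX).2, Finset.sum_apply]
  exact single_le_sum (f := fun i => X i j) (fun _ _ => Nat.zero_le _) (mem_univ i)

theorem UTables_zero : UTables d 0 0 = {0} := by
  ext X
  simp [mem_UTables, funext_iff, sum_eq_zero_iff]

theorem add_single_single_mem_UTables_iff {r c : Fin d → ℕ} {Y : Fin d → Fin d → ℕ}
    {a b : Fin d} :
    Y + Pi.single a (Pi.single b 1) ∈ UTables d (r + Pi.single a 1) (c + Pi.single b 1) ↔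
      Y ∈ UTables d r c := by
  have hrow : (fun i => ∑ j, (Y + Pi.single a (Pi.single b 1) : Fin d → Fin d → ℕ) i j) =
      (fun i => ∑ j, Y i j) + Pi.single a 1 := by
    funext i
    by_cases hi : i = a
    · subst hi; simp [sum_add_distrib]
    · simp [hi]
  have hcol : ∑ i, (Y + Pi.single a (Pi.single b 1) : Fin d → Fin d → ℕ) i =
      ∑ i, Y i + Pi.single b 1 := by
    simp only [Pi.add_apply, sum_add_distrib, Fintype.sum_pi_single']
  rw [mem_UTables, mem_UTables, hrow, hcol, add_left_inj, add_left_inj]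

theorem sum_UTables_add_single_mul_tableWeight (K : Fin d → Fin d → ℝ) (r c : Fin d → ℕ)
    (a b : Fin d) :
    ∑ X ∈ UTables d (r + Pi.single a 1) (c + Pi.single b 1), (X a b : ℝ) * tableWeight K X =
      K a b * ∑ Y ∈ UTables d r c, tableWeight K Y := by
  set E : Fin d → Fin d → ℕ := Pi.single a (Pi.single b 1) with hE
  have hsub : (UTables d r c).map (addRightEmbedding E) ⊆
      UTables d (r + Pi.single a 1) (c + Pi.single b 1) := by
    intro X hX
    obtain ⟨Y, hY, rfl⟩ := mem_map.1 hX
    exact add_single_single_mem_UTables_iff.2 hY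
  have hzero : ∀ X ∈ UTables d (r + Pi.single a 1) (c + Pi.single b 1),
      X ∉ (UTables d r c).map (addRightEmbedding E) → (X a b : ℝ) * tableWeight K X = 0 := by
    intro X hX hXn
    suffices X a b = 0 by simp [this]
    by_contra hab
    have hEX : E ≤ X := by
      rw [hE, Pi.single_le_iff_of_nonneg fun _ _ => Nat.zero_le _,
        Pi.single_le_iff_of_nonneg fun _ => Nat.zero_le _]
      omega
    have hX' : X - E + E = X := tsub_add_cancel_of_le hEX
    rw [← hX'] at hX
    exact hXn (mem_map.2 ⟨X - E, add_single_single_mem_UTables_iff.1 hX, hX'⟩)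
  rw [← sum_subset hsub hzero, sum_map, mul_sum]
  refine sum_congr rfl fun Y _ => ?_
  simpa [hE] using tableWeight_add_single_single K Y a b

noncomputable def tableSum (K : Fin d → Fin d → ℝ) (r c : Fin d → ℕ) : ℝ :=
  ((∏ i, (r i).factorial : ℕ) : ℝ) * ((∏ j, (c j).factorial : ℕ) : ℝ) *
    ∑ X ∈ UTables d r c, tableWeight K X

theorem prod_factorial_mul_sum_UTables_entry_mul_tableWeight (K : Fin d → Fin d → ℝ)
    (r c : Fin d → ℕ) (a j : Fin d) :
    ((∏ j, (c j).factorial : ℕ) : ℝ) *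
        ∑ X ∈ UTables d (r + Pi.single a 1) c, (X a j : ℝ) * tableWeight K X =
      c j * K a j * (((∏ i, ((c - Pi.single j 1 : Fin d → ℕ) i).factorial : ℕ) : ℝ) *
        ∑ Y ∈ UTables d r (c - Pi.single j 1), tableWeight K Y) := by
  rcases Nat.eq_zero_or_pos (c j) with hcj | hcj
  · have hX : ∀ X ∈ UTables d (r + Pi.single a 1) c, (X a j : ℝ) * tableWeight K X = 0 := by
      intro X hX
      have hle := entry_le_of_mem_UTables hX a j
      simp [show X a j = 0 by omega]
    simp [sum_eq_zero hX, hcj]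
  · have hc : c - Pi.single j 1 + Pi.single j 1 = c :=
      tsub_add_cancel_of_le ((Pi.single_le_iff_of_nonneg fun _ => Nat.zero_le _).2 hcj)
    obtain ⟨c', rfl⟩ : ∃ c' : Fin d → ℕ, c = c' + Pi.single j 1 := ⟨_, hc.symm⟩
    rw [add_tsub_cancel_right, sum_UTables_add_single_mul_tableWeight, prod_factorial_add_single]
    simp only [Pi.add_apply, Pi.single_eq_same]
    push_cast
    ring

-- For `c j = 0` the truncated `c - Pi.single j 1` is just `c`; that term carries the factor `c j`.
theorem tableSum_add_single (K : Fin d → Fin d → ℝ) (r c : Fin d → ℕ) (a : Fin d) :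
    tableSum K (r + Pi.single a 1) c =
      ∑ j, c j * K a j * tableSum K r (c - Pi.single j 1) := by
  have hrow : ((r a + 1 : ℕ) : ℝ) * ∑ X ∈ UTables d (r + Pi.single a 1) c, tableWeight K X =
      ∑ j, ∑ X ∈ UTables d (r + Pi.single a 1) c, (X a j : ℝ) * tableWeight K X := by
    rw [mul_sum, sum_comm]
    refine sum_congr rfl fun X hX => ?_
    rw [← sum_mul, ← Nat.cast_sum, congrFun (mem_UTables.1 hX).1 a]
    simp
  calc tableSum K (r + Pi.single a 1) c
      = ((∏ i, (r i).factorial : ℕ) : ℝ) * (((∏ j, (c j).factorial : ℕ) : ℝ) *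
          (((r a + 1 : ℕ) : ℝ) * ∑ X ∈ UTables d (r + Pi.single a 1) c, tableWeight K X)) := by
        rw [tableSum, prod_factorial_add_single, Nat.cast_mul]
        ring
    _ = ((∏ i, (r i).factorial : ℕ) : ℝ) * ∑ j, ((∏ j, (c j).factorial : ℕ) : ℝ) *
          ∑ X ∈ UTables d (r + Pi.single a 1) c, (X a j : ℝ) * tableWeight K X := by
        rw [hrow, mul_sum]
    _ = ∑ j, c j * K a j * tableSum K r (c - Pi.single j 1) := by
        rw [mul_sum]
        refine sum_congr rfl fun j _ => ?_
        rw [prod_factorial_mul_sum_UTables_entry_mul_tableWeight, tableSum]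
        ring

end UTables

open Equiv in
theorem sum_perm_prod_eq_tableSum {d : ℕ} (K : Fin d → Fin d → ℝ) {N : ℕ}
    (ρ γ : Fin N → Fin d) :
    ∑ π : Perm (Fin N), ∏ t, K (ρ t) (γ (π t)) = tableSum K (fiberCard ρ) (fiberCard γ) := by
  induction N with
  | zero =>
    simp [fiberCard_of_isEmpty, tableSum, UTables_zero, tableWeight]
  | succ N ih =>
    have hγ : ∀ p, fiberCard (γ ∘ swap 0 p ∘ Fin.succ) = fiberCard γ - Pi.single (γ p) 1 := by
      intro p
      have h := fiberCard_fin_succ (γ ∘ swap 0 p)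
      rw [fiberCard_comp_equiv] at h
      simp only [Function.comp_apply, swap_apply_left] at h
      exact eq_tsub_of_add_eq h.symm
    calc ∑ π : Perm (Fin (N + 1)), ∏ t, K (ρ t) (γ (π t))
        = ∑ p, K (ρ 0) (γ p) *
            ∑ σ : Perm (Fin N), ∏ t, K (ρ t.succ) ((γ ∘ swap 0 p ∘ Fin.succ) (σ t)) := by
          rw [← Perm.decomposeFin.symm.sum_comp, Fintype.sum_prod_type]
          simp [Fin.prod_univ_succ, mul_sum, Perm.decomposeFin_symm_apply_succ]
      _ = ∑ p, K (ρ 0) (γ p) *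
            tableSum K (fiberCard (ρ ∘ Fin.succ)) (fiberCard γ - Pi.single (γ p) 1) := by
          simp_rw [← hγ]
          exact sum_congr rfl fun p _ => congrArg _ (ih _ _)
      _ = ∑ j, fiberCard γ j * K (ρ 0) j *
            tableSum K (fiberCard (ρ ∘ Fin.succ)) (fiberCard γ - Pi.single j 1) := by
          have hfiber := sum_comp_eq_sum_fiberCard_mul γ fun j =>
            K (ρ 0) j * tableSum K (fiberCard (ρ ∘ Fin.succ)) (fiberCard γ - Pi.single j 1)
          rw [hfiber]
          simp only [mul_assoc]
      _ = tableSum K (fiberCard ρ) (fiberCard γ) := by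
          rw [fiberCard_fin_succ ρ, tableSum_add_single]

theorem stmt9_general (d N : ℕ) (r c : Fin d → ℕ)
    (ρ γ : Fin N → Fin d)
    (hρ : ∀ i, (Finset.univ.filter fun t => ρ t = i).card = r i)
    (hγ : ∀ j, (Finset.univ.filter fun t => γ t = j).card = c j)
    (K : Fin d → Fin d → ℝ) :
    ∑ π : Equiv.Perm (Fin N), ∏ t, K (ρ t) (γ (π t)) =
      ((∏ i, (r i).factorial : ℕ) : ℝ) * ((∏ j, (c j).factorial : ℕ) : ℝ) *
        ∑ X ∈ UTables d r c,
          (1 / ∏ i, ∏ j, ((X i j).factorial : ℝ)) * ∏ i, ∏ j, K i j ^ X i j := by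
  rw [sum_perm_prod_eq_tableSum, show fiberCard ρ = r from funext hρ,
    show fiberCard γ = c from funext hγ]
  rfl

/-- for any nonnegative matrix `K ∈ ℝ₊^{d×d}`,
`∑_{π ∈ S_N} ∏_t k_{ρ_t, (γ_π)_t} = (∏ᵢ rᵢ!)(∏ⱼ cⱼ!) ∑_{X ∈ 𝕌(r,c)} (∏_{ij} k_{ij}^{x_{ij}}) / ∏_{ij} x_{ij}!`,
where `ρ, γ` are the canonical sorted representations of `r` and `c`. -/
theorem stmt9 (d N : ℕ) (r c : Fin d → ℕ) (hr : ∑ i, r i = N) (hc : ∑ j, c j = N)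
    (ρ γ : Fin N → Fin d) (hρm : Monotone ρ) (hγm : Monotone γ)
    (hρ : ∀ i, (Finset.univ.filter fun t => ρ t = i).card = r i)
    (hγ : ∀ j, (Finset.univ.filter fun t => γ t = j).card = c j)
    (K : Fin d → Fin d → ℝ) (hK : ∀ i j, 0 ≤ K i j) :
    ∑ π : Equiv.Perm (Fin N), ∏ t, K (ρ t) (γ (π t)) =
      ((∏ i, (r i).factorial : ℕ) : ℝ) * ((∏ j, (c j).factorial : ℕ) : ℝ) *
        ∑ X ∈ UTables d r c,
          (1 / ∏ i, ∏ j, ((X i j).factorial : ℝ)) * ∏ i, ∏ j, K i j ^ X i j :=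
  stmt9_general d N r c ρ γ hρ hγ K
end

section
/- Let $\sigma, \sigma' \in S_d$ be permutations and $r,c \in \mathbb{N}^d$ with equal total mass $N$. Let $\rho_\sigma \in \{1,\dots,d\}^N$ be the vector listing $\sigma(1)$ repeated $r_{\sigma(1)}$ times, then $\sigma(2)$ repeated $r_{\sigma(2)}$ times, etc., and similarly $\gamma_{\sigma'}$ for $c$. Then $\mathbf{NW}_{\sigma^{-1}\sigma'^{-1}}(r_\sigma, c_{\sigma'}) = \chi(\rho_\sigma; \gamma_{\sigma'})$, i.e., the Northwestern corner table of the permuted margins, with rows and columns permuted back, equals the contingency matrix of the pair of sequences $(\rho_\sigma, \gamma_{\sigma'})$. -/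
/-!
If `ρ` is sorted and the value `k` occurs `r k` times, then `ρ t = i` exactly for the
positions `Rᵢ₋₁ ≤ t < Rᵢ` between consecutive cumulative margins `Rᵢ = r₁ + ⋯ + rᵢ`.
So the `(i, j)` cell of the contingency table of two sorted sequences counts the integers in
the intersection of `[Rᵢ₋₁, Rᵢ)` and `[Cⱼ₋₁, Cⱼ)`, which is the closed form of `NW`.
Sorting with respect to the orders transported by `σ` and `σ'` gives the permuted version.
-/

/-- The Northwestern corner table of margins `r, c ∈ ℕ^d`.  The recursive rule (give
`x₁₁ = min(r₁,c₁)`, decrement the margins, and recurse on the remaining mass) admits the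
closed form `x_{ij} = (min(Rᵢ, Cⱼ) - max(Rᵢ₋₁, Cⱼ₋₁))₊` in terms of the cumulative margins
`Rᵢ = r₁ + ⋯ + rᵢ`, `Cⱼ = c₁ + ⋯ + cⱼ` (truncated `ℕ`-subtraction gives the positive
part), which we take as the definition. -/
def NW {d : ℕ} (r c : Fin d → ℕ) : Fin d → Fin d → ℕ := fun i j =>
  min (∑ k ∈ Finset.univ.filter (· ≤ i), r k) (∑ k ∈ Finset.univ.filter (· ≤ j), c k)
    - max (∑ k ∈ Finset.univ.filter (· < i), r k) (∑ k ∈ Finset.univ.filter (· < j), c k)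

open Finset

theorem Fin.card_filter_le_val_and_val_lt {N : ℕ} (a b : ℕ) :
    #{t : Fin N | a ≤ (t : ℕ) ∧ (t : ℕ) < b} = min N b - a := by
  rw [← Nat.card_Ico, ← card_map Fin.valEmbedding, map_filter', Fin.map_valEmbedding_univ]
  congr 1
  ext n
  simp only [Fin.valEmbedding_apply, Fin.exists_iff, exists_and_left, exists_prop,
    exists_eq_right_right, mem_filter, mem_Iio, mem_Ico, lt_inf_iff]
  omega

section Monotone

variable {N : ℕ} {β : Type*} {ρ : Fin N → β}

theorem Monotone.val_lt_card_filter_le_iff [Preorder β] [DecidableLE β] (hρ : Monotone ρ)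
    (t : Fin N) (i : β) :
    (t : ℕ) < #{s | ρ s ≤ i} ↔ ρ t ≤ i :=
  Fin.lt_card_filter_univ_iff_apply_of_imp _ fun _ _ hts hs => (hρ hts).trans hs

theorem Monotone.val_lt_card_filter_lt_iff [Preorder β] [DecidableLT β] (hρ : Monotone ρ)
    (t : Fin N) (i : β) :
    (t : ℕ) < #{s | ρ s < i} ↔ ρ t < i :=
  Fin.lt_card_filter_univ_iff_apply_of_imp _ fun _ _ hts hs => (hρ hts).trans_lt hs

theorem Monotone.apply_eq_iff [LinearOrder β] (hρ : Monotone ρ) (t : Fin N) (i : β) :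
    ρ t = i ↔ #{s | ρ s < i} ≤ (t : ℕ) ∧ (t : ℕ) < #{s | ρ s ≤ i} := by
  rw [← not_lt, hρ.val_lt_card_filter_lt_iff, hρ.val_lt_card_filter_le_iff, not_lt]
  exact le_antisymm_iff.trans and_comm

end Monotone

theorem NW_card_fiber_of_monotone {N d : ℕ} {ρ γ : Fin N → Fin d}
    (hρ : Monotone ρ) (hγ : Monotone γ) (i j : Fin d) :
    NW (fun k => #{t | ρ t = k}) (fun k => #{t | γ t = k}) i j = #{t | ρ t = i ∧ γ t = j} := by
  simp only [NW, sum_card_fiberwise_eq_card_filter, mem_filter, mem_univ, true_and]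
  have hR : #{t | ρ t ≤ i} ≤ N := (card_le_univ _).trans_eq (Fintype.card_fin N)
  have hC : #{t | γ t ≤ j} ≤ N := (card_le_univ _).trans_eq (Fintype.card_fin N)
  have cell : ∀ t, ρ t = i ∧ γ t = j ↔
      max #{s | ρ s < i} #{s | γ s < j} ≤ (t : ℕ) ∧ (t : ℕ) < min #{s | ρ s ≤ i} #{s | γ s ≤ j} := by
    intro t
    rw [hρ.apply_eq_iff, hγ.apply_eq_iff]
    omega
  rw [filter_congr fun t _ => cell t, Fin.card_filter_le_val_and_val_lt]
  congr 1
  omega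

theorem stmt15_general (d N : ℕ) (σ σ' : Equiv.Perm (Fin d)) (r c : Fin d → ℕ)
    (ρ γ : Fin N → Fin d)
    (hρm : Monotone (fun t => σ.symm (ρ t))) (hγm : Monotone (fun t => σ'.symm (γ t)))
    (hρ : ∀ i, (Finset.univ.filter fun t => ρ t = i).card = r i)
    (hγ : ∀ j, (Finset.univ.filter fun t => γ t = j).card = c j) :
    ∀ i j, NW (fun i => r (σ i)) (fun j => c (σ' j)) (σ.symm i) (σ'.symm j) =
      (Finset.univ.filter fun t => ρ t = i ∧ γ t = j).card := by
  intro i j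
  have hr : (fun k => r (σ k)) = fun k => #{t | σ.symm (ρ t) = k} := by
    ext k; simp only [← hρ, Equiv.symm_apply_eq]
  have hc : (fun k => c (σ' k)) = fun k => #{t | σ'.symm (γ t) = k} := by
    ext k; simp only [← hγ, Equiv.symm_apply_eq]
  rw [hr, hc, NW_card_fiber_of_monotone hρm hγm]
  simp only [Equiv.apply_eq_iff_eq]

/-- let `σ, σ' ∈ S_d` and `r, c ∈ ℕ^d` of equal total mass `N`.  Let
`ρ_σ ∈ {1,…,d}^N` be the sequence listing `σ(1)` repeated `r_{σ(1)}` times, then `σ(2)`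
repeated `r_{σ(2)}` times, etc. (characterized by: `σ⁻¹ ∘ ρ_σ` is monotone and the value
`i` appears `r i` times in `ρ_σ`), and similarly `γ_{σ'}` for `c`.  Then the
Northwestern corner table of the permuted margins, with rows and columns permuted back,
`NW_{σ⁻¹σ'⁻¹}(r_σ, c_{σ'})`, equals the contingency matrix `χ(ρ_σ; γ_{σ'})`. -/
theorem stmt15 (d N : ℕ) (σ σ' : Equiv.Perm (Fin d)) (r c : Fin d → ℕ)
    (hr : ∑ i, r i = N) (hc : ∑ j, c j = N)
    (ρ γ : Fin N → Fin d)
    (hρm : Monotone (fun t => σ.symm (ρ t))) (hγm : Monotone (fun t => σ'.symm (γ t)))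
    (hρ : ∀ i, (Finset.univ.filter fun t => ρ t = i).card = r i)
    (hγ : ∀ j, (Finset.univ.filter fun t => γ t = j).card = c j) :
    ∀ i j, NW (fun i => r (σ i)) (fun j => c (σ' j)) (σ.symm i) (σ'.symm j) =
      (Finset.univ.filter fun t => ρ t = i ∧ γ t = j).card :=
  stmt15_general d N σ σ' r c ρ γ hρm hγm hρ hγ
end

section
/- Let $R \subseteq S_d$ be any set of permutations, $M \in \mathbb{R}^{d\times d}$, and suppose the matrix $K$ with $k_{ij} = e^{-m_{ij}}$ is positive semidefinite. Then the Northwestern kernel $N(r,c;K,R) := \sum_{\sigma,\sigma' \in R} \exp\left(-\langle M, \mathbf{NW}_{\sigma^{-1}\sigma'^{-1}}(r_\sigma, c_{\sigma'})\rangle\right)$ is a positive definite kernel on $\Sigma_d^N$, the set of integral histograms of total mass $N$. -/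
open Finset
open scoped ComplexOrder

namespace Matrix

variable {𝕜 ι τ α : Type*} [RCLike 𝕜] [Fintype ι]

theorem posSemidef_prod_hadamard (s : Finset τ) {K : τ → Matrix ι ι 𝕜}
    (hK : ∀ t ∈ s, (K t).PosSemidef) : (of fun a b => ∏ t ∈ s, K t a b).PosSemidef := by
  classical
  induction s using Finset.induction_on with
  | empty => simpa [vecMulVec] using posSemidef_vecMulVec_self_star fun _ : ι => (1 : 𝕜)
  | insert t s ht ih =>
    have h := (hK t (mem_insert_self t s)).hadamard (ih fun u hu => hK u (mem_insert_of_mem hu))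
    simpa [prod_insert ht, hadamard] using h

theorem PosSemidef.prod_submatrix [Fintype τ] {K : Matrix α α 𝕜} (hK : K.PosSemidef)
    (φ : ι → τ → α) : (of fun a b => ∏ t, K (φ a t) (φ b t)).PosSemidef :=
  posSemidef_prod_hadamard univ fun t _ => hK.submatrix (φ · t)

theorem PosSemidef.sum_mul_mul_sum_sum_nonneg {κ : Type*} [Fintype κ]
    {G : Matrix (ι × κ) (ι × κ) ℝ} (hG : G.PosSemidef) (c : ι → ℝ) :
    0 ≤ ∑ p, ∑ q, c p * c q * ∑ a, ∑ b, G (p, a) (q, b) := by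
  have h := hG.dotProduct_mulVec_nonneg fun a => c a.1
  simp only [dotProduct, mulVec, Fintype.sum_prod_type, star_trivial, mul_sum] at h
  refine h.trans_eq (Fintype.sum_congr _ _ fun p => ?_)
  simp only [mul_sum]
  rw [sum_comm]
  exact Fintype.sum_congr _ _ fun q => Fintype.sum_congr _ _ fun a =>
    Fintype.sum_congr _ _ fun b => by ring

end Matrix

namespace NW

variable {d N : ℕ}

def block (r : Fin d → ℕ) (i : Fin d) : Finset ℕ :=
  Ico (∑ k ∈ Iio i, r k) (∑ k ∈ Iic i, r k)

theorem card_block (r : Fin d → ℕ) (i : Fin d) : #(block r i) = r i := by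
  rw [block, Nat.card_Ico, ← Iio_insert, sum_insert notMem_Iio_self, add_tsub_cancel_right]

theorem block_subset_range {r : Fin d → ℕ} (hr : ∑ k, r k = N) (i : Fin d) :
    block r i ⊆ range N := fun _ ht =>
  mem_range.2 <| (mem_Ico.1 ht).2.trans_le <| hr ▸ sum_le_sum_of_subset (subset_univ _)

theorem pairwise_disjoint_block (r : Fin d → ℕ) :
    Pairwise fun i j => Disjoint (block r i) (block r j) := by
  intro i j hij
  wlog h : i < j generalizing i j
  · exact (this hij.symm (hij.lt_or_gt.resolve_left h)).symm
  have hle : ∑ k ∈ Iic i, r k ≤ ∑ k ∈ Iio j, r k :=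
    sum_le_sum_of_subset fun k hk => mem_Iio.2 ((mem_Iic.1 hk).trans_lt h)
  exact disjoint_left.2 fun t hi hj => by simp only [block, mem_Ico] at hi hj; omega

theorem biUnion_block {r : Fin d → ℕ} (hr : ∑ k, r k = N) :
    univ.biUnion (block r) = range N := by
  refine eq_of_subset_of_card_le (biUnion_subset.2 fun i _ => block_subset_range hr i) ?_
  rw [card_biUnion ((pairwise_disjoint_block r).set_pairwise _), card_range]
  simp [card_block, hr]

theorem exists_mem_block {r : Fin d → ℕ} (hr : ∑ k, r k = N) (t : Fin N) :
    ∃ i, (t : ℕ) ∈ block r i := by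
  simpa [← biUnion_block hr] using mem_range.2 t.isLt

noncomputable def quantile (r : Fin d → ℕ) (hr : ∑ k, r k = N) (t : Fin N) : Fin d :=
  (exists_mem_block hr t).choose

theorem quantile_eq_iff {r : Fin d → ℕ} (hr : ∑ k, r k = N) (t : Fin N) (i : Fin d) :
    quantile r hr t = i ↔ (t : ℕ) ∈ block r i := by
  have hq := (exists_mem_block hr t).choose_spec
  refine ⟨fun h => h ▸ hq, fun h => by_contra fun hne => ?_⟩
  exact disjoint_left.1 (pairwise_disjoint_block r hne) hq h

end NW

open NW

theorem NW_eq_card_block_inter_block {d : ℕ} (r c : Fin d → ℕ) (i j : Fin d) :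
    NW r c i j = #(block r i ∩ block c j) := by
  simp only [NW, block, Ico_inter_Ico, Nat.card_Ico, filter_gt_eq_Iio, filter_ge_eq_Iic]

theorem NW_eq_card_filter_quantile {d N : ℕ} {r c : Fin d → ℕ} (hr : ∑ k, r k = N)
    (hc : ∑ k, c k = N) (i j : Fin d) :
    NW r c i j = #{t : Fin N | quantile r hr t = i ∧ quantile c hc t = j} := by
  rw [NW_eq_card_block_inter_block, ← card_attachFin _ fun t ht =>
    mem_range.1 (block_subset_range hr i (mem_inter.1 ht).1)]
  congr 1
  ext t
  simp [quantile_eq_iff]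

theorem sum_mul_NW_eq_sum_quantile {R : Type*} [Semiring R] {d N : ℕ} {r c : Fin d → ℕ}
    (hr : ∑ k, r k = N) (hc : ∑ k, c k = N) (B : Fin d → Fin d → R) :
    ∑ i, ∑ j, B i j * (NW r c i j : R) = ∑ t, B (quantile r hr t) (quantile c hc t) := by
  rw [← sum_fiberwise' univ (fun t => (quantile r hr t, quantile c hc t)) fun ij => B ij.1 ij.2,
    Fintype.sum_prod_type]
  refine Fintype.sum_congr _ _ fun i => Fintype.sum_congr _ _ fun j => ?_
  simp [NW_eq_card_filter_quantile hr hc, Nat.cast_comm]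

theorem sum_mul_NW_perm_eq_sum_quantile {R : Type*} [Semiring R] {d N : ℕ}
    (B : Fin d → Fin d → R) {r c : Fin d → ℕ} {σ σ' : Equiv.Perm (Fin d)} (hr : ∑ k, r (σ k) = N)
    (hc : ∑ k, c (σ' k) = N) :
    ∑ i, ∑ j, B i j * (NW (fun i => r (σ i)) (fun j => c (σ' j)) (σ.symm i) (σ'.symm j) : R)
      = ∑ t, B (σ (quantile _ hr t)) (σ' (quantile _ hc t)) := by
  rw [← sum_mul_NW_eq_sum_quantile hr hc fun a b => B (σ a) (σ' b), ← Equiv.sum_comp σ]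
  refine Fintype.sum_congr _ _ fun a => ?_
  rw [← Equiv.sum_comp σ']
  simp

/-- let `R ⊆ S_d` be any set of permutations and `M ∈ ℝ^{d×d}` such that
the matrix `K = (e^{-m_{ij}})` is positive semidefinite.  Then the Northwestern kernel
`N(r,c;K,R) = ∑_{σ,σ' ∈ R} exp(-⟨M, NW_{σ⁻¹σ'⁻¹}(r_σ, c_{σ'})⟩)` is a positive definite
kernel on `Σ_d^N`. -/
theorem stmt16 (d N : ℕ) (R : Finset (Equiv.Perm (Fin d))) (M : Matrix (Fin d) (Fin d) ℝ)
    (hK : (Matrix.of fun i j => Real.exp (-M i j)).PosSemidef)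
    (n : ℕ) (x : Fin n → {r : Fin d → ℕ // ∑ i, r i = N}) (coef : Fin n → ℝ) :
    0 ≤ ∑ p, ∑ q, coef p * coef q *
      ∑ σ ∈ R, ∑ σ' ∈ R,
        Real.exp (-∑ i, ∑ j, M i j *
          (NW (fun i => (x p).1 (σ i)) (fun j => (x q).1 (σ' j)) (σ.symm i) (σ'.symm j) : ℝ)) := by
  have hperm (p : Fin n) (σ : Equiv.Perm (Fin d)) : ∑ k, (x p).1 (σ k) = N :=
    (Equiv.sum_comp σ _).trans (x p).2
  let φ (a : Fin n × R) (t : Fin N) : Fin d := a.2.1 (quantile _ (hperm a.1 a.2) t)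
  have hexp (p q : Fin n) (σ σ' : Equiv.Perm (Fin d)) :
      Real.exp (-∑ i, ∑ j, M i j *
        (NW (fun i => (x p).1 (σ i)) (fun j => (x q).1 (σ' j)) (σ.symm i) (σ'.symm j) : ℝ))
        = ∏ t, Real.exp (-M (σ (quantile _ (hperm p σ) t)) (σ' (quantile _ (hperm q σ') t))) := by
    rw [sum_mul_NW_perm_eq_sum_quantile M (hperm p σ) (hperm q σ'), ← sum_neg_distrib,
      Real.exp_sum]
  simpa only [hexp, Matrix.of_apply, ← sum_coe_sort R] using
    (hK.prod_submatrix φ).sum_mul_mul_sum_sum_nonneg coef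
end
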